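/- arXiv:2303.17036 — 2 statements merged into one kernel-verified Lean document; each statement's English description precedes it below -/
import Mathlib

section
/- For every ν > −1 and every n ≥ 1, the zeros of Bessel functions satisfy the interlacing inequalities j_{ν,n} < j_{ν+1,n} < j_{ν,n+1}, where j_{ν,1} < j_{ν,2} < ... denote the positive zeros of J_ν in increasing order. -/
/-!
Write `J_ν(r) = r^ν I_ν(r)`, where `I_ν(r) = ∑ aₖ(ν) r^{2k}` is an even entire series. The
coefficients satisfy `2(k+1) aₖ₊₁(ν) = -aₖ(ν+1)` and `aₖ(ν) = 2(k+ν+1) aₖ(ν+1)`, which give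
`I_ν' = -r I_{ν+1}` and `(r^{2ν+2} I_{ν+1})' = r^{2ν+1} I_ν`, i.e. `(r^{-ν} J_ν)' = -r^{-ν} J_{ν+1}`
and `(r^{ν+1} J_{ν+1})' = r^{ν+1} J_ν`. By Rolle's theorem a zero of `J_{ν+1}` lies strictly
between any two consecutive positive zeros of `J_ν`, and a zero of `J_ν` lies strictly between `0`
and the first positive zero of `J_{ν+1}` and between any two consecutive ones. Walking along the
two enumerations, induction on `n` turns these facts into the interlacing inequalities.
-/

open Real

/-- The entire function `I_ν` with `I_ν(r) = r^{−ν} J_ν(r)` for `r > 0`. -/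
noncomputable def besselI (ν : ℝ) (r : ℝ) : ℝ :=
  ∑' k : ℕ, ((-1 : ℝ) ^ k / ((k.factorial : ℝ) * Real.Gamma ((k : ℝ) + ν + 1)))
    * r ^ (2 * k) / (2 : ℝ) ^ (2 * (k : ℝ) + ν)

/-- The Bessel function of the first kind `J_ν`. -/
noncomputable def besselJ (ν : ℝ) (r : ℝ) : ℝ := r ^ ν * besselI ν r

open Set Filter

noncomputable def besselCoeff (ν : ℝ) (k : ℕ) : ℝ :=
  (-1) ^ k / (k.factorial * Gamma (k + ν + 1) * 2 ^ (2 * (k : ℝ) + ν))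

theorem besselI_eq_tsum (ν r : ℝ) : besselI ν r = ∑' k : ℕ, besselCoeff ν k * r ^ (2 * k) := by
  unfold besselI besselCoeff
  exact tsum_congr fun k => by field_simp

theorem two_mul_succ_mul_besselCoeff_succ (ν : ℝ) (k : ℕ) :
    2 * (k + 1) * besselCoeff ν (k + 1) = -besselCoeff (ν + 1) k := by
  have h2 : (2 : ℝ) ^ (2 * ((k + 1 : ℕ) : ℝ) + ν) = 2 ^ (2 * (k : ℝ) + (ν + 1)) * 2 := by
    rw [← rpow_add_one two_ne_zero]; push_cast; ring_nf
  simp only [besselCoeff, Nat.factorial_succ, pow_succ, h2]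
  push_cast
  rw [show (k : ℝ) + 1 + ν + 1 = k + (ν + 1) + 1 by ring]
  field_simp

theorem besselCoeff_eq_mul_besselCoeff_add_one {ν : ℝ} (hν : -1 < ν) (k : ℕ) :
    besselCoeff ν k = 2 * (k + ν + 1) * besselCoeff (ν + 1) k := by
  have hk : (k : ℝ) + ν + 1 ≠ 0 := by linarith [k.cast_nonneg (α := ℝ)]
  simp only [besselCoeff, show (k : ℝ) + (ν + 1) + 1 = k + ν + 1 + 1 by ring, Gamma_add_one hk,
    show 2 * (k : ℝ) + (ν + 1) = 2 * k + ν + 1 by ring, rpow_add_one two_ne_zero]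
  field_simp

theorem abs_besselCoeff_succ {ν : ℝ} (hν : -1 < ν) (k : ℕ) :
    |besselCoeff ν (k + 1)| = |besselCoeff ν k| / (4 * (k + 1) * (k + ν + 1)) := by
  have hk : 0 < (k : ℝ) + ν + 1 := by linarith [k.cast_nonneg (α := ℝ)]
  have h : besselCoeff ν (k + 1) = -besselCoeff (ν + 1) k / (2 * (k + 1)) := by
    rw [← two_mul_succ_mul_besselCoeff_succ]; field_simp
  simp only [h, besselCoeff_eq_mul_besselCoeff_add_one hν k, abs_div, abs_neg, abs_mul, abs_two,
    abs_of_pos hk, abs_of_pos (by positivity : (0 : ℝ) < k + 1)]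
  field_simp
  ring

theorem summable_besselCoeff_majorant {ν : ℝ} (hν : -1 < ν) (R : ℝ) :
    Summable fun k : ℕ => (k + 1) * |besselCoeff ν k| * R ^ (2 * k) := by
  have hf (m : ℕ) : 0 ≤ (m + 1 : ℝ) * |besselCoeff ν m| * R ^ (2 * m) :=
    mul_nonneg (by positivity) ((even_two_mul m).pow_nonneg R)
  refine summable_of_ratio_norm_eventually_le one_half_lt_one ?_
  filter_upwards [eventually_ge_atTop ⌈R ^ 2⌉₊, eventually_ge_atTop 1] with k hkR hk1
  have hkR : R ^ 2 ≤ k := Nat.ceil_le.mp hkR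
  have hk1 : (1 : ℝ) ≤ k := by exact_mod_cast hk1
  have hD : 0 < 4 * ((k : ℝ) + 1) * (k + ν + 1) := by nlinarith
  have hratio : ((k : ℝ) + 2) * R ^ 2 / (4 * (k + 1) * (k + ν + 1)) ≤ 1 / 2 * (k + 1) := by
    rw [div_le_iff₀ hD]
    nlinarith [mul_le_mul_of_nonneg_left hkR (by positivity : (0 : ℝ) ≤ k + 2)]
  have hA : 0 ≤ |besselCoeff ν k| * R ^ (2 * k) :=
    mul_nonneg (abs_nonneg _) ((even_two_mul k).pow_nonneg R)
  rw [Real.norm_of_nonneg (hf _), Real.norm_of_nonneg (hf _), abs_besselCoeff_succ hν,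
    show R ^ (2 * (k + 1)) = R ^ (2 * k) * R ^ 2 by ring]
  push_cast
  calc (k + 1 + 1) * (|besselCoeff ν k| / (4 * (k + 1) * (k + ν + 1))) * (R ^ (2 * k) * R ^ 2)
      = (k + 2) * R ^ 2 / (4 * (k + 1) * (k + ν + 1)) * (|besselCoeff ν k| * R ^ (2 * k)) := by
        ring
    _ ≤ 1 / 2 * (k + 1) * (|besselCoeff ν k| * R ^ (2 * k)) := by gcongr
    _ = 1 / 2 * ((k + 1) * |besselCoeff ν k| * R ^ (2 * k)) := by ring

theorem summable_besselCoeff_mul_pow {ν : ℝ} (hν : -1 < ν) (r : ℝ) :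
    Summable fun k : ℕ => besselCoeff ν k * r ^ (2 * k) :=
  (summable_besselCoeff_majorant hν r).of_norm_bounded fun k => by
    rw [norm_mul, norm_pow, Real.norm_eq_abs, Real.norm_eq_abs, (even_two_mul k).pow_abs, mul_assoc]
    exact le_mul_of_one_le_left (mul_nonneg (abs_nonneg _) ((even_two_mul k).pow_nonneg r))
      (by simp)

theorem hasDerivAt_besselI {ν : ℝ} (hν : -1 < ν) (r : ℝ) :
    HasDerivAt (besselI ν) (-r * besselI (ν + 1) r) r := by
  set R := |r| + 1
  have hr : r ∈ Ioo (-R) R := abs_lt.mp (lt_add_one _)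
  have hbound (k : ℕ) (y : ℝ) (hy : y ∈ Ioo (-R) R) :
      ‖besselCoeff ν k * ((2 * k : ℕ) * y ^ (2 * k - 1))‖ ≤
        2 * ((k + 1) * |besselCoeff ν k| * R ^ (2 * k)) := by
    have hR : 1 ≤ R := le_add_of_nonneg_left (abs_nonneg r)
    calc ‖besselCoeff ν k * ((2 * k : ℕ) * y ^ (2 * k - 1))‖
        = |besselCoeff ν k| * (2 * k * |y| ^ (2 * k - 1)) := by
          simp
      _ ≤ |besselCoeff ν k| * (2 * (k + 1) * R ^ (2 * k)) := by
          gcongr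
          · linarith
          · exact (pow_le_pow_left₀ (abs_nonneg y) (abs_lt.mpr hy).le _).trans
              (pow_le_pow_right₀ hR (Nat.sub_le _ _))
      _ = 2 * ((k + 1) * |besselCoeff ν k| * R ^ (2 * k)) := by ring
  have hderiv := hasDerivAt_tsum_of_isPreconnected
    ((summable_besselCoeff_majorant hν R).mul_left 2) isOpen_Ioo isPreconnected_Ioo
    (fun k y _ => (hasDerivAt_pow (2 * k) y).const_mul (besselCoeff ν k)) hbound hr
    (summable_besselCoeff_mul_pow hν r) hr
  have hsum : Summable fun k : ℕ => besselCoeff ν k * ((2 * k : ℕ) * r ^ (2 * k - 1)) :=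
    ((summable_besselCoeff_majorant hν R).mul_left 2).of_norm_bounded fun k => hbound k r hr
  have hI : besselI ν = fun z => ∑' k : ℕ, besselCoeff ν k * z ^ (2 * k) :=
    funext (besselI_eq_tsum ν)
  have hval : -r * besselI (ν + 1) r =
      ∑' k : ℕ, besselCoeff ν k * ((2 * k : ℕ) * r ^ (2 * k - 1)) := by
    rw [hsum.tsum_eq_zero_add, besselI_eq_tsum, ← tsum_mul_left]
    simp only [mul_zero, Nat.cast_zero, zero_mul, zero_add]
    refine tsum_congr fun k => ?_
    rw [← neg_neg (besselCoeff (ν + 1) k), ← two_mul_succ_mul_besselCoeff_succ,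
      show 2 * (k + 1) - 1 = 2 * k + 1 by omega]
    push_cast
    ring
  rw [hI, hval]
  exact hderiv

theorem besselI_eq_sub {ν : ℝ} (hν : -1 < ν) (r : ℝ) :
    besselI ν r = (2 * ν + 2) * besselI (ν + 1) r - r ^ 2 * besselI (ν + 2) r := by
  have hν1 : -1 < ν + 1 := by linarith
  have hterm (k : ℕ) : besselCoeff ν k * r ^ (2 * k) - (2 * ν + 2) *
      (besselCoeff (ν + 1) k * r ^ (2 * k)) = 2 * k * besselCoeff (ν + 1) k * r ^ (2 * k) := by
    rw [besselCoeff_eq_mul_besselCoeff_add_one hν]; ring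
  have hsum : Summable fun k : ℕ => 2 * k * besselCoeff (ν + 1) k * r ^ (2 * k) :=
    ((summable_besselCoeff_mul_pow hν r).sub
      ((summable_besselCoeff_mul_pow hν1 r).mul_left _)).congr hterm
  suffices besselI ν r - (2 * ν + 2) * besselI (ν + 1) r = -(r ^ 2 * besselI (ν + 2) r) by
    linarith
  rw [besselI_eq_tsum, besselI_eq_tsum, besselI_eq_tsum, ← tsum_mul_left,
    ← (summable_besselCoeff_mul_pow hν r).tsum_sub ((summable_besselCoeff_mul_pow hν1 r).mul_left _),
    tsum_congr hterm, hsum.tsum_eq_zero_add, ← tsum_mul_left, ← tsum_neg]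
  simp only [Nat.cast_zero, mul_zero, zero_mul, zero_add]
  refine tsum_congr fun k => ?_
  rw [show ν + 2 = ν + 1 + 1 by ring]
  push_cast
  linear_combination r ^ (2 * k + 2) * two_mul_succ_mul_besselCoeff_succ (ν + 1) k

theorem continuous_besselI {ν : ℝ} (hν : -1 < ν) : Continuous (besselI ν) :=
  continuous_iff_continuousAt.mpr fun r => (hasDerivAt_besselI hν r).continuousAt

theorem hasDerivAt_rpow_mul_besselI_add_one {ν r : ℝ} (hν : -1 < ν) (hr : 0 < r) :
    HasDerivAt (fun x => x ^ (2 * ν + 2) * besselI (ν + 1) x) (r ^ (2 * ν + 1) * besselI ν r) r := by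
  refine ((hasDerivAt_rpow_const (p := 2 * ν + 2) (Or.inl hr.ne')).mul
    (hasDerivAt_besselI (by linarith : -1 < ν + 1) r)).congr_deriv ?_
  have hpow : r ^ (2 * ν + 2) = r ^ (2 * ν + 1) * r := by
    rw [← rpow_add_one hr.ne']; ring_nf
  rw [besselI_eq_sub hν, show 2 * ν + 2 - 1 = 2 * ν + 1 by ring, show ν + 1 + 1 = ν + 2 by ring,
    hpow]
  ring

theorem besselJ_eq_zero_iff {μ r : ℝ} (hr : 0 < r) : besselJ μ r = 0 ↔ besselI μ r = 0 := by
  simp [besselJ, (rpow_pos_of_pos hr μ).ne']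

theorem exists_mem_Ioo_besselI_add_one_eq_zero {ν p q : ℝ} (hν : -1 < ν) (hp : 0 < p)
    (hpq : p < q) (hp0 : besselI ν p = 0) (hq0 : besselI ν q = 0) :
    ∃ c ∈ Ioo p q, besselI (ν + 1) c = 0 := by
  obtain ⟨c, hc, hc0⟩ := exists_hasDerivAt_eq_zero hpq (continuous_besselI hν).continuousOn
    (hp0.trans hq0.symm) fun x _ => hasDerivAt_besselI hν x
  exact ⟨c, hc, (mul_eq_zero.mp hc0).resolve_left (neg_ne_zero.mpr (hp.trans hc.1).ne')⟩

theorem exists_mem_Ioo_besselI_eq_zero {ν p q : ℝ} (hν : -1 < ν) (hp : 0 ≤ p) (hpq : p < q)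
    (hp0 : p = 0 ∨ besselI (ν + 1) p = 0) (hq0 : besselI (ν + 1) q = 0) :
    ∃ c ∈ Ioo p q, besselI ν c = 0 := by
  have hν2 : 0 < 2 * ν + 2 := by linarith
  have hcont : Continuous fun x : ℝ => x ^ (2 * ν + 2) * besselI (ν + 1) x :=
    (continuous_rpow_const hν2.le).mul (continuous_besselI (by linarith))
  have hpq0 : p ^ (2 * ν + 2) * besselI (ν + 1) p = q ^ (2 * ν + 2) * besselI (ν + 1) q := by
    rcases hp0 with rfl | hp0
    · simp [zero_rpow hν2.ne', hq0]
    · simp [hp0, hq0]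
  obtain ⟨c, hc, hc0⟩ := exists_hasDerivAt_eq_zero hpq hcont.continuousOn hpq0
    fun x hx => hasDerivAt_rpow_mul_besselI_add_one hν (hp.trans_lt hx.1)
  exact ⟨c, hc, (mul_eq_zero.mp hc0).resolve_left (rpow_pos_of_pos (hp.trans_lt hc.1) _).ne'⟩

theorem StrictMonoOn.lt_of_exists_mem_Ioo {α : Type*} [LinearOrder α] {a b : ℕ → α}
    (hb : StrictMonoOn b (Ici 1)) (h₁ : ∃ m, 1 ≤ m ∧ b m < a 1)
    (hgap : ∀ k, 1 ≤ k → ∃ m, 1 ≤ m ∧ b m ∈ Ioo (a k) (a (k + 1))) :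
    ∀ n, 1 ≤ n → b n < a n := by
  intro n hn
  induction n, hn using Nat.le_induction with
  | base =>
    obtain ⟨m, hm, hbm⟩ := h₁
    exact ((hb.le_iff_le self_mem_Ici hm).2 hm).trans_lt hbm
  | succ n hn ih =>
    obtain ⟨m, hm, hlo, hhi⟩ := hgap n hn
    have hnm : n < m := (hb.lt_iff_lt hn hm).1 (ih.trans hlo)
    exact ((hb.le_iff_le (mem_Ici.2 (by omega)) hm).2 hnm).trans_lt hhi

/-- Let `j μ n` (for `n ≥ 1`) enumerate the positive zeros of the Bessel
function `J_μ` in increasing order, for every `μ > −1`. Then, for every `ν > −1` and every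
`n ≥ 1`, the interlacing inequalities `j_{ν,n} < j_{ν+1,n} < j_{ν,n+1}` hold. -/
theorem bessel_zeros_interlacing
    (j : ℝ → ℕ → ℝ)
    (hpos : ∀ μ : ℝ, -1 < μ → ∀ n : ℕ, 1 ≤ n → 0 < j μ n)
    (hzero : ∀ μ : ℝ, -1 < μ → ∀ n : ℕ, 1 ≤ n → besselJ μ (j μ n) = 0)
    (hmono : ∀ μ : ℝ, -1 < μ → ∀ n m : ℕ, 1 ≤ n → n < m → j μ n < j μ m)
    (hall : ∀ μ : ℝ, -1 < μ → ∀ r : ℝ, 0 < r → besselJ μ r = 0 → ∃ n : ℕ, 1 ≤ n ∧ j μ n = r)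
    (ν : ℝ) (hν : -1 < ν) (n : ℕ) (hn : 1 ≤ n) :
    j ν n < j (ν + 1) n ∧ j (ν + 1) n < j ν (n + 1) := by
  have hν1 : -1 < ν + 1 := by linarith
  have hstrict {μ : ℝ} (hμ : -1 < μ) : StrictMonoOn (j μ) (Ici 1) :=
    fun a ha b _ => hmono μ hμ a b ha
  have hzeroI {μ : ℝ} (hμ : -1 < μ) {n : ℕ} (hn : 1 ≤ n) : besselI μ (j μ n) = 0 :=
    (besselJ_eq_zero_iff (hpos μ hμ n hn)).1 (hzero μ hμ n hn)
  have henum {μ p q : ℝ} (hμ : -1 < μ) (hp : 0 ≤ p) (h : ∃ c ∈ Ioo p q, besselI μ c = 0) :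
      ∃ m, 1 ≤ m ∧ j μ m ∈ Ioo p q := by
    obtain ⟨c, hc, hc0⟩ := h
    have hc' : 0 < c := hp.trans_lt hc.1
    obtain ⟨m, hm, rfl⟩ := hall μ hμ c hc' ((besselJ_eq_zero_iff hc').2 hc0)
    exact ⟨m, hm, hc⟩
  have hconsec {μ : ℝ} (hμ : -1 < μ) {k : ℕ} (hk : 1 ≤ k) : j μ k < j μ (k + 1) :=
    hmono μ hμ k (k + 1) hk k.lt_succ_self
  constructor
  · refine (hstrict hν).lt_of_exists_mem_Ioo ?_ (fun k hk => ?_) n hn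
    · exact (henum hν le_rfl (exists_mem_Ioo_besselI_eq_zero hν le_rfl
        (hpos _ hν1 1 le_rfl) (.inl rfl) (hzeroI hν1 le_rfl))).imp fun _ h => ⟨h.1, h.2.2⟩
    · exact henum hν (hpos _ hν1 k hk).le (exists_mem_Ioo_besselI_eq_zero hν (hpos _ hν1 k hk).le
        (hconsec hν1 hk) (.inr (hzeroI hν1 hk)) (hzeroI hν1 (by omega)))
  · refine (hstrict hν1).lt_of_exists_mem_Ioo (a := fun k => j ν (k + 1)) ?_ (fun k hk => ?_) n hn
    · exact (henum hν1 (hpos _ hν 1 le_rfl).le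
        (exists_mem_Ioo_besselI_add_one_eq_zero hν (hpos _ hν 1 le_rfl) (hconsec hν le_rfl)
          (hzeroI hν le_rfl) (hzeroI hν (by omega)))).imp fun _ h => ⟨h.1, h.2.2⟩
    · exact henum hν1 (hpos _ hν (k + 1) (by omega)).le (exists_mem_Ioo_besselI_add_one_eq_zero hν
        (hpos _ hν (k + 1) (by omega)) (hconsec hν (by omega)) (hzeroI hν (by omega))
        (hzeroI hν (by omega)))
end

section
/- With ρ(τ) := −(cos τ + (1 + τ tan τ)/cos τ), for all λ, t ∈ [0,1] one has ρ(1)/cos(1) ≤ ρ(λt)/cos(λt) ≤ −2. -/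
/-!
Since `1 + τ tan τ = (cos τ + τ sin τ) / cos τ` and `cos² τ + sin² τ = 1`,
`ρ(τ) / cos τ = -(1 + g τ)` with `g τ = (cos τ + τ sin τ) / cos³ τ`.
The derivative of `g` has numerator `τ cos⁴ τ + 3 sin τ cos² τ (cos τ + τ sin τ) ≥ 0`, so `g` is
monotone on `[0, π/2)`; hence `ρ / cos` is antitone there, and `[0, 1] ⊆ [0, π/2)` with
`g 0 = 1` gives both bounds.
-/

open Real Set

lemma cos_pos_of_mem_Ico {x : ℝ} (hx : x ∈ Ico 0 (π / 2)) : 0 < cos x :=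
  cos_pos_of_mem_Ioo ⟨by linarith [pi_pos, hx.1], hx.2⟩

lemma sin_nonneg_of_mem_Ico {x : ℝ} (hx : x ∈ Ico 0 (π / 2)) : 0 ≤ sin x :=
  sin_nonneg_of_nonneg_of_le_pi hx.1 (by linarith [pi_pos, hx.2])

lemma neg_cos_add_one_add_mul_tan_div_cos_div_cos {x : ℝ} (hx : cos x ≠ 0) :
    -(cos x + (1 + x * tan x) / cos x) / cos x =
      -(1 + (cos x + x * sin x) / cos x ^ 3) := by
  rw [tan_eq_sin_div_cos]
  field_simp

lemma hasDerivAt_cos_add_mul_sin_div_cos_pow_three {x : ℝ} (hx : cos x ≠ 0) :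
    HasDerivAt (fun τ => (cos τ + τ * sin τ) / cos τ ^ 3)
      ((x * cos x ^ 4 + 3 * sin x * cos x ^ 2 * (cos x + x * sin x)) / (cos x ^ 3) ^ 2) x := by
  have hu : HasDerivAt (fun τ => cos τ + τ * sin τ) (x * cos x) x :=
    ((hasDerivAt_cos x).add ((hasDerivAt_id' x).mul (hasDerivAt_sin x))).congr_deriv (by ring)
  exact (hu.fun_div ((hasDerivAt_cos x).fun_pow 3) (pow_ne_zero 3 hx)).congr_deriv
    (by norm_num; ring)

lemma monotoneOn_cos_add_mul_sin_div_cos_pow_three :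
    MonotoneOn (fun τ => (cos τ + τ * sin τ) / cos τ ^ 3) (Ico 0 (π / 2)) := by
  refine monotoneOn_of_hasDerivWithinAt_nonneg (convex_Ico 0 (π / 2))
    (f' := fun x => (x * cos x ^ 4 + 3 * sin x * cos x ^ 2 * (cos x + x * sin x)) / (cos x ^ 3) ^ 2)
    ?_ (fun x hx => ?_) (fun x hx => ?_)
  · exact ContinuousOn.div (by fun_prop) (by fun_prop) fun x hx =>
      pow_ne_zero 3 (cos_pos_of_mem_Ico hx).ne'
  · rw [interior_Ico] at hx
    exact (hasDerivAt_cos_add_mul_sin_div_cos_pow_three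
      (cos_pos_of_mem_Ico (Ioo_subset_Ico_self hx)).ne').hasDerivWithinAt
  · rw [interior_Ico] at hx
    have hx0 := hx.1.le
    have hcos := cos_pos_of_mem_Ico (Ioo_subset_Ico_self hx)
    have hsin := sin_nonneg_of_mem_Ico (Ioo_subset_Ico_self hx)
    positivity

lemma antitoneOn_rho_div_cos :
    AntitoneOn (fun τ => -(cos τ + (1 + τ * tan τ) / cos τ) / cos τ) (Ico 0 (π / 2)) := by
  intro x hx y hy hxy
  simp only [neg_cos_add_one_add_mul_tan_div_cos_div_cos (cos_pos_of_mem_Ico hx).ne',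
    neg_cos_add_one_add_mul_tan_div_cos_div_cos (cos_pos_of_mem_Ico hy).ne']
  linarith [monotoneOn_cos_add_mul_sin_div_cos_pow_three hx hy hxy]

/-- With `ρ(τ) := −(cos τ + (1 + τ tan τ)/cos τ)`, for all `λ, t ∈ [0,1]`
one has `ρ(1)/cos(1) ≤ ρ(λt)/cos(λt) ≤ −2`. -/
theorem rho_over_cos_bounds
    (ρ : ℝ → ℝ)
    (hρ : ρ = fun τ => -(Real.cos τ + (1 + τ * Real.tan τ) / Real.cos τ)) :
    ∀ lam ∈ Set.Icc (0 : ℝ) 1, ∀ t ∈ Set.Icc (0 : ℝ) 1,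
      ρ 1 / Real.cos 1 ≤ ρ (lam * t) / Real.cos (lam * t)
        ∧ ρ (lam * t) / Real.cos (lam * t) ≤ -2 := by
  intro lam hlam t ht
  have hsub : Icc (0 : ℝ) 1 ⊆ Ico 0 (π / 2) :=
    Icc_subset_Ico_right (by linarith [pi_gt_three])
  have hs : lam * t ∈ Icc (0 : ℝ) 1 := ⟨mul_nonneg hlam.1 ht.1, mul_le_one₀ hlam.2 ht.1 ht.2⟩
  have hle_at_zero := antitoneOn_rho_div_cos (hsub (left_mem_Icc.2 zero_le_one)) (hsub hs) hs.1
  have hge_at_one := antitoneOn_rho_div_cos (hsub hs) (hsub (right_mem_Icc.2 zero_le_one)) hs.2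
  subst hρ
  refine ⟨hge_at_one, hle_at_zero.trans_eq ?_⟩
  norm_num
end
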